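/- arXiv:1705.04421 — 7 statements merged into one kernel-verified Lean document; each statement's English description precedes it below -/
import Mathlib

section
/- Fix ε > 0 and an integer d ≥ 1, and let f : ℝ → ℝ be the Laplace density with scale 2/ε, i.e. f(x) = (ε/4)·exp(−ε|x|/2). For v ∈ Fin d let e_v : Fin d → ℝ denote the unit histogram with e_v(i) = 1 if i = v and e_v(i) = 0 otherwise. Then for all v₁, v₂ ∈ Fin d and every B : Fin d → ℝ, ∏_{i ∈ Fin d} f(B(i) − e_{v₁}(i)) ≤ e^ε · ∏_{i ∈ Fin d} f(B(i) − e_{v₂}(i)). (This is the density-ratio bound showing that Histogram Encoding, which adds independent Laplace(2/ε) noise to each coordinate of the unit histogram of the input, satisfies ε-local differential privacy.) -/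
/-- Histogram Encoding satisfies ε-LDP (density-ratio bound): with `f` the Laplace density of
scale `2/ε` and `e_v` the unit histogram of `v`, for all inputs `v₁, v₂` and every report
`B : Fin d → ℝ`, `∏ i, f (B i − e_{v₁} i) ≤ e^ε · ∏ i, f (B i − e_{v₂} i)`. -/
theorem histogram_encoding_ldp
    (ε : ℝ) (hε : 0 < ε) (d : ℕ) (hd : 1 ≤ d)
    (f : ℝ → ℝ) (hf : ∀ x, f x = ε / 4 * Real.exp (-(ε * |x|) / 2))
    (e : Fin d → Fin d → ℝ)
    (he : ∀ v i : Fin d, e v i = if i = v then 1 else 0) :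
    ∀ (v₁ v₂ : Fin d) (B : Fin d → ℝ),
      ∏ i, f (B i - e v₁ i) ≤ Real.exp ε * ∏ i, f (B i - e v₂ i) := by
  intro v₁ v₂ B
  have hfnn : ∀ x, 0 ≤ f x := by
    intro x; rw [hf]; positivity
  -- pointwise ratio bound
  have key : ∀ i, f (B i - e v₁ i) ≤
      Real.exp (ε * |e v₂ i - e v₁ i| / 2) * f (B i - e v₂ i) := by
    intro i
    rw [hf, hf]
    rw [show Real.exp (ε * |e v₂ i - e v₁ i| / 2) *
        (ε / 4 * Real.exp (-(ε * |B i - e v₂ i|) / 2)) =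
        ε / 4 * (Real.exp (ε * |e v₂ i - e v₁ i| / 2 + -(ε * |B i - e v₂ i|) / 2)) by
      rw [Real.exp_add]; ring]
    apply mul_le_mul_of_nonneg_left _ (by positivity)
    apply Real.exp_le_exp.mpr
    have htri : |B i - e v₂ i| ≤ |e v₂ i - e v₁ i| + |B i - e v₁ i| := by
      have h2 : |B i - e v₂ i - (B i - e v₁ i)| = |e v₂ i - e v₁ i| := by
        rw [show B i - e v₂ i - (B i - e v₁ i) = -(e v₂ i - e v₁ i) by ring, abs_neg]
      nlinarith [abs_sub_abs_le_abs_sub (B i - e v₂ i) (B i - e v₁ i)]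
    nlinarith
  calc ∏ i, f (B i - e v₁ i)
      ≤ ∏ i, (Real.exp (ε * |e v₂ i - e v₁ i| / 2) * f (B i - e v₂ i)) := by
        apply Finset.prod_le_prod (fun i _ => hfnn _) (fun i _ => key i)
    _ = Real.exp (∑ i, ε * |e v₂ i - e v₁ i| / 2) * ∏ i, f (B i - e v₂ i) := by
        rw [Finset.prod_mul_distrib, Real.exp_sum]
    _ ≤ Real.exp ε * ∏ i, f (B i - e v₂ i) := by
        apply mul_le_mul_of_nonneg_right _ (Finset.prod_nonneg (fun i _ => hfnn _))
        apply Real.exp_le_exp.mpr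
        have hsum : ∑ i, ε * |e v₂ i - e v₁ i| / 2 ≤
            ∑ i, (ε / 2) * (e v₁ i + e v₂ i) := by
          apply Finset.sum_le_sum
          intro i _
          rw [he, he]
          split_ifs <;> simp_all <;> nlinarith [hε]
        have h1 : ∑ i, e v₁ i = 1 := by
          simp [he, Finset.sum_ite_eq']
        have h2 : ∑ i, e v₂ i = 1 := by
          simp [he, Finset.sum_ite_eq']
        have hT : ∑ i, (ε / 2) * (e v₁ i + e v₂ i) = ε := by
          rw [← Finset.mul_sum, Finset.sum_add_distrib, h1, h2]; ring
        linarith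
end

section
/- Fix an integer d ≥ 2 and reals p, q with 0 < q ≤ p < 1. For each input v ∈ Fin d, let M(v) be the probability distribution on bit vectors B : Fin d → {0,1} in which the bits are independent and Pr[B(i) = 1] = p if i = v and Pr[B(i) = 1] = q if i ≠ v. Then for all inputs v₁, v₂ ∈ Fin d and every bit vector B, Pr[M(v₁) = B] ≤ (p(1−q))/((1−p)q) · Pr[M(v₂) = B]; that is, the Unary Encoding protocol satisfies ε-local differential privacy with ε = ln( p(1−q)/((1−p)q) ). -/
/-- The Unary Encoding protocol satisfies ε-LDP with `ε = ln(p(1−q)/((1−p)q))`: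
the probability of any output bit vector `B` on input `v₁` is at most
`p(1−q)/((1−p)q)` times its probability on input `v₂`. -/
theorem unary_encoding_ldp
    (d : ℕ) (hd : 2 ≤ d) (p q : ℝ) (hq0 : 0 < q) (hqp : q ≤ p) (hp1 : p < 1)
    (M : Fin d → (Fin d → Bool) → ℝ)
    (hM : ∀ (v : Fin d) (B : Fin d → Bool), M v B =
      ∏ i, (if B i then (if i = v then p else q) else (if i = v then 1 - p else 1 - q))) :
    ∀ (v₁ v₂ : Fin d) (B : Fin d → Bool),
      M v₁ B ≤ (p * (1 - q)) / ((1 - p) * q) * M v₂ B := by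
  intro v₁ v₂ B
  have hp0 : 0 < p := lt_of_lt_of_le hq0 hqp
  have hq1 : q < 1 := lt_of_le_of_lt hqp hp1
  have hp1' : 0 < 1 - p := by linarith
  have hq1' : 0 < 1 - q := by linarith
  set F : Fin d → Fin d → ℝ := fun v i =>
    if B i then (if i = v then p else q) else (if i = v then 1 - p else 1 - q) with hF
  have hFnn : ∀ v i, 0 ≤ F v i := by
    intro v i
    simp only [hF]
    split <;> split <;> linarith
  have hc1 : (1:ℝ) ≤ (p * (1 - q)) / ((1 - p) * q) := by
    rw [le_div_iff₀ (by positivity)]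
    nlinarith
  have hMnn : ∀ v, 0 ≤ M v B := by
    intro v
    rw [hM]
    exact Finset.prod_nonneg fun i _ => hFnn v i
  by_cases hvv : v₁ = v₂
  · subst hvv
    calc M v₁ B = 1 * M v₁ B := (one_mul _).symm
    _ ≤ (p * (1 - q)) / ((1 - p) * q) * M v₁ B :=
      mul_le_mul_of_nonneg_right hc1 (hMnn v₁)
  · have hv2 : v₂ ∈ (Finset.univ.erase v₁) :=
      Finset.mem_erase.mpr ⟨fun h => hvv h.symm, Finset.mem_univ v₂⟩
    have hsplit : ∀ v, M v B = F v v₁ * (F v v₂ *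
        ∏ i ∈ (Finset.univ.erase v₁).erase v₂, F v i) := by
      intro v
      rw [hM]
      rw [Finset.mul_prod_erase _ _ hv2, Finset.mul_prod_erase _ _ (Finset.mem_univ v₁)]
    have hrest : ∀ i ∈ (Finset.univ.erase v₁).erase v₂, F v₁ i = F v₂ i := by
      intro i hi
      rcases Finset.mem_erase.mp hi with ⟨hi2, hi1'⟩
      rcases Finset.mem_erase.mp hi1' with ⟨hi1, _⟩
      simp only [hF, if_neg hi1, if_neg hi2]
    set R : ℝ := ∏ i ∈ (Finset.univ.erase v₁).erase v₂, F v₁ i with hR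
    have hRnn : 0 ≤ R := Finset.prod_nonneg fun i _ => hFnn v₁ i
    have h1 : M v₁ B = F v₁ v₁ * (F v₁ v₂ * R) := hsplit v₁
    have h2 : M v₂ B = F v₂ v₁ * (F v₂ v₂ * R) := by
      rw [hsplit v₂, ← Finset.prod_congr rfl hrest]
    rw [h1, h2]
    have e11 : F v₁ v₁ = if B v₁ then p else 1 - p := by simp [hF]
    have e12 : F v₁ v₂ = if B v₂ then q else 1 - q := by
      simp only [hF, if_neg (Ne.symm hvv)]
    have e21 : F v₂ v₁ = if B v₁ then q else 1 - q := by
      simp only [hF, if_neg hvv]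
    have e22 : F v₂ v₂ = if B v₂ then p else 1 - p := by simp [hF]
    rw [e11, e12, e21, e22, div_mul_eq_mul_div, le_div_iff₀ (by positivity)]
    have hkey : (1 - p) * q ≤ p * (1 - q) := by nlinarith
    rcases Bool.eq_false_or_eq_true (B v₁) with hb1 | hb1 <;>
      rcases Bool.eq_false_or_eq_true (B v₂) with hb2 | hb2 <;>
      simp only [hb1, hb2, if_true, Bool.false_eq_true, if_false] <;>
      nlinarith [mul_nonneg (mul_nonneg (mul_nonneg hp0.le hq0.le) hRnn) (sub_nonneg.mpr hkey),
        mul_nonneg (mul_nonneg (mul_nonneg hp1'.le hq1'.le) hRnn) (sub_nonneg.mpr hkey),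
        mul_le_mul_of_nonneg_right
          (mul_le_mul hkey hkey (by positivity) (by positivity)) hRnn]
end

section
/- Fix an integer d ≥ 2 and a real f with 0 < f < 1. For each input v ∈ Fin d, let M(v) be the probability distribution on bit vectors B : Fin d → {0,1} in which the bits are independent and Pr[B(i) = 1] = 1 − f/2 if i = v and Pr[B(i) = 1] = f/2 if i ≠ v. Then for all inputs v₁, v₂ ∈ Fin d and every bit vector B, Pr[M(v₁) = B] ≤ ((1 − f/2)/(f/2))² · Pr[M(v₂) = B]; that is, Basic RAPPOR satisfies ε-local differential privacy with ε = ln( ((1 − f/2)/(f/2))² ). -/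
/-- Basic RAPPOR (symmetric unary encoding with keep-probability `1 − f/2`) satisfies ε-LDP
with `ε = ln(((1 − f/2)/(f/2))²)`: the probability of any output bit vector `B` on input `v₁`
is at most `((1 − f/2)/(f/2))²` times its probability on input `v₂`. -/
theorem basic_rappor_ldp
    (d : ℕ) (hd : 2 ≤ d) (f : ℝ) (hf0 : 0 < f) (hf1 : f < 1)
    (M : Fin d → (Fin d → Bool) → ℝ)
    (hM : ∀ (v : Fin d) (B : Fin d → Bool), M v B =
      ∏ i, (if B i then (if i = v then 1 - f / 2 else f / 2)
            else (if i = v then f / 2 else 1 - f / 2))) :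
    ∀ (v₁ v₂ : Fin d) (B : Fin d → Bool),
      M v₁ B ≤ ((1 - f / 2) / (f / 2)) ^ 2 * M v₂ B := by
  intro v₁ v₂ B
  have hp2 : (0:ℝ) < f / 2 := by linarith
  have hq2 : (0:ℝ) < 1 - f / 2 := by linarith
  set r : ℝ := (1 - f / 2) / (f / 2) with hr
  have hr1 : (1:ℝ) ≤ r := by
    rw [hr, le_div_iff₀ hp2]; linarith
  have hr0 : (0:ℝ) ≤ r := by linarith
  set p : Fin d → ℝ := fun i =>
    (if B i then (if i = v₁ then 1 - f / 2 else f / 2)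
      else (if i = v₁ then f / 2 else 1 - f / 2)) with hp
  set q : Fin d → ℝ := fun i =>
    (if B i then (if i = v₂ then 1 - f / 2 else f / 2)
      else (if i = v₂ then f / 2 else 1 - f / 2)) with hq
  set c : Fin d → ℝ := fun i => if i = v₁ ∨ i = v₂ then r else 1 with hc
  have hqnn : ∀ i, 0 ≤ q i := by
    intro i; simp only [hq]
    split <;> split <;> linarith
  have hpnn : ∀ i, 0 ≤ p i := by
    intro i; simp only [hp]
    split <;> split <;> linarith
  have key : ∀ i, p i ≤ c i * q i := by
    have ha : r * (f / 2) = 1 - f / 2 := div_mul_cancel₀ _ (ne_of_gt hp2)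
    have hb2 : f / 2 ≤ r * (1 - f / 2) := by nlinarith [mul_nonneg (by linarith : (0:ℝ) ≤ r - 1) (le_of_lt hq2)]
    have hb3 : 1 - f / 2 ≤ r * (1 - f / 2) := by nlinarith [mul_nonneg (by linarith : (0:ℝ) ≤ r - 1) (le_of_lt hq2)]
    have hb4 : f / 2 ≤ r * (f / 2) := by nlinarith [mul_nonneg (by linarith : (0:ℝ) ≤ r - 1) (le_of_lt hp2)]
    intro i
    simp only [hp, hq, hc]
    split_ifs <;> first | linarith | tauto
  have step1 : M v₁ B ≤ ∏ i, (c i * q i) := by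
    rw [hM v₁ B]
    exact Finset.prod_le_prod (fun i _ => hpnn i) (fun i _ => key i)
  have step2 : (∏ i, (c i * q i)) = (∏ i, c i) * M v₂ B := by
    rw [hM v₂ B, Finset.prod_mul_distrib]
  have hqprod : 0 ≤ M v₂ B := by
    rw [hM v₂ B]; exact Finset.prod_nonneg (fun i _ => hqnn i)
  have hcprod : (∏ i, c i) ≤ r ^ 2 := by
    have : (∏ i, c i) = r ^ (Finset.univ.filter (fun i => i = v₁ ∨ i = v₂)).card := by
      rw [hc, Finset.prod_ite, Finset.prod_const, Finset.prod_const, one_pow, mul_one]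
    rw [this]
    have hsub : (Finset.univ.filter (fun i => i = v₁ ∨ i = v₂)) ⊆ {v₁, v₂} := by
      intro i hi
      simp only [Finset.mem_filter] at hi
      simp [hi.2]
    have hcard : (Finset.univ.filter (fun i => i = v₁ ∨ i = v₂)).card ≤ 2 := by
      calc _ ≤ ({v₁, v₂} : Finset (Fin d)).card := Finset.card_le_card hsub
        _ ≤ 2 := Finset.card_insert_le _ _ |>.trans (by simp)
    exact pow_le_pow_right₀ hr1 hcard
  calc M v₁ B ≤ (∏ i, c i) * M v₂ B := by rw [← step2]; exact step1
    _ ≤ r ^ 2 * M v₂ B := mul_le_mul_of_nonneg_right hcprod hqprod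
end

section
/- Fix ε > 0 and let V(q) = ((e^ε − 1)q + 1)² / ((e^ε − 1)²·(1 − q)·q) for q ∈ (0,1). Then for every q ∈ (0,1), V(q) ≥ 4e^ε/(e^ε − 1)², with equality if and only if q = 1/(e^ε + 1) (in which case the corresponding p satisfying p(1−q)/((1−p)q) = e^ε equals 1/2). In particular, the Optimized Unary Encoding protocol, with p = 1/2 and q = 1/(e^ε + 1), has approximate estimator variance n·4e^ε/(e^ε − 1)², which is minimal among all unary-encoding protocols satisfying ε-LDP. -/
/-!
Write `E = e^ε`. The whole argument is the polynomial identity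
`((E - 1) q + 1)² - 4 E (1 - q) q = ((E + 1) q - 1)²`: dividing by `(E - 1)² (1 - q) q > 0`
shows that `V(q) - 4E/(E - 1)²` is a square over a positive number, vanishing exactly at
`q = 1/(E + 1)`. For this `q` the privacy ratio `p(1 - q)/((1 - p) q)` is `p E/(1 - p)`,
which equals `E` only for `p = 1/2`.
-/

open Real

noncomputable def ueVariance (E q : ℝ) : ℝ :=
  ((E - 1) * q + 1) ^ 2 / ((E - 1) ^ 2 * (1 - q) * q)

section Variance

variable {E q : ℝ}

theorem ueVariance_sub_four_mul_div (hE : E ≠ 1) (hq₀ : q ≠ 0) (hq₁ : q ≠ 1) :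
    ueVariance E q - 4 * E / (E - 1) ^ 2 = ((E + 1) * q - 1) ^ 2 / ((E - 1) ^ 2 * (1 - q) * q) := by
  have hE' : E - 1 ≠ 0 := sub_ne_zero.mpr hE
  have hq₁' : 1 - q ≠ 0 := sub_ne_zero.mpr hq₁.symm
  rw [ueVariance, div_sub_div _ _ (by positivity) (by positivity)]
  field_simp
  ring

theorem four_mul_div_le_ueVariance (hE : E ≠ 1) (hq₀ : 0 < q) (hq₁ : q < 1) :
    4 * E / (E - 1) ^ 2 ≤ ueVariance E q := by
  have hE' : E - 1 ≠ 0 := sub_ne_zero.mpr hE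
  have hq₁' : 0 < 1 - q := sub_pos.mpr hq₁
  rw [← sub_nonneg, ueVariance_sub_four_mul_div hE hq₀.ne' hq₁.ne]
  positivity

theorem ueVariance_eq_four_mul_div_iff (hE : E ≠ 1) (hE₁ : E + 1 ≠ 0) (hq₀ : 0 < q)
    (hq₁ : q < 1) :
    ueVariance E q = 4 * E / (E - 1) ^ 2 ↔ q = 1 / (E + 1) := by
  have hE' : E - 1 ≠ 0 := sub_ne_zero.mpr hE
  have hq₁' : 0 < 1 - q := sub_pos.mpr hq₁
  rw [← sub_eq_zero, ueVariance_sub_four_mul_div hE hq₀.ne' hq₁.ne,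
    div_eq_zero_iff, or_iff_left (by positivity), sq_eq_zero_iff, sub_eq_zero,
    eq_div_iff hE₁, mul_comm]

end Variance

section PrivacyRatio

variable {E p : ℝ}

theorem privacyRatio_one_div_add_one (hE : E + 1 ≠ 0) (p : ℝ) :
    p * (1 - 1 / (E + 1)) / ((1 - p) * (1 / (E + 1))) = p * E / (1 - p) := by
  field_simp
  ring

theorem eq_one_half_of_mul_div_one_sub_eq (hE : E ≠ 0) (h : p * E / (1 - p) = E) : p = 1 / 2 := by
  have hp : 1 - p ≠ 0 := by
    rintro hp
    rw [hp, div_zero] at h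
    exact hE h.symm
  rw [div_eq_iff hp] at h
  have := mul_right_cancel₀ hE (h.trans (mul_comm _ _))
  linarith

end PrivacyRatio

/-- Optimized Unary Encoding: the unary-encoding approximate variance
`V(q) = ((e^ε−1)q+1)²/((e^ε−1)²(1−q)q)` satisfies `V(q) ≥ 4e^ε/(e^ε−1)²` for all
`q ∈ (0,1)`, with equality iff `q = 1/(e^ε+1)`; and for that `q`, the unique `p` with
`p(1−q)/((1−p)q) = e^ε` is `p = 1/2`. -/
theorem oue_optimal
    (ε : ℝ) (hε : 0 < ε) :
    (∀ q : ℝ, 0 < q → q < 1 →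
      (4 * Real.exp ε / (Real.exp ε - 1) ^ 2
          ≤ ((Real.exp ε - 1) * q + 1) ^ 2 / ((Real.exp ε - 1) ^ 2 * (1 - q) * q)) ∧
      (((Real.exp ε - 1) * q + 1) ^ 2 / ((Real.exp ε - 1) ^ 2 * (1 - q) * q)
          = 4 * Real.exp ε / (Real.exp ε - 1) ^ 2 ↔ q = 1 / (Real.exp ε + 1))) ∧
    (∀ p : ℝ,
      p * (1 - 1 / (Real.exp ε + 1)) / ((1 - p) * (1 / (Real.exp ε + 1))) = Real.exp ε →
      p = 1 / 2) := by
  have hE : exp ε ≠ 1 := (one_lt_exp_iff.mpr hε).ne'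
  have hE₁ : exp ε + 1 ≠ 0 := by positivity
  refine ⟨fun q hq₀ hq₁ => ⟨four_mul_div_le_ueVariance hE hq₀ hq₁,
    ueVariance_eq_four_mul_div_iff hE hE₁ hq₀ hq₁⟩, fun p hp => ?_⟩
  rw [privacyRatio_one_div_add_one hE₁] at hp
  exact eq_one_half_of_mul_div_one_sub_eq (exp_ne_zero ε) hp
end

section
/- Fix ε > 0, integers d ≥ 2 and g ≥ 2, and a finite nonempty family 𝓗 of functions from Fin d to Fin g. For each input v ∈ Fin d, let M(v) be the distribution on pairs (H, y) ∈ 𝓗 × Fin g obtained by choosing H uniformly at random from 𝓗 and then outputting y = H(v) with probability e^ε/(e^ε + g − 1) and each other y ∈ Fin g with probability 1/(e^ε + g − 1). Then for all inputs v₁, v₂ ∈ Fin d and every output (H, y), Pr[M(v₁) = (H, y)] ≤ e^ε · Pr[M(v₂) = (H, y)]; that is, the Local Hashing protocol satisfies ε-local differential privacy. -/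
/-- The Local Hashing protocol satisfies ε-LDP: the mechanism picks a hash function `H`
uniformly from a finite family `𝓗` of functions `Fin d → Fin g` and reports `(H, y)` with
`y = H v` with probability `e^ε/(e^ε+g−1)` and each other `y` with probability
`1/(e^ε+g−1)`; then for all inputs `v₁, v₂` and every output `(H, y)` with `H ∈ 𝓗`,
`Pr[M(v₁) = (H,y)] ≤ e^ε · Pr[M(v₂) = (H,y)]`. -/
theorem local_hashing_ldp
    (ε : ℝ) (hε : 0 < ε) (d g : ℕ) (hd : 2 ≤ d) (hg : 2 ≤ g)
    (𝓗 : Finset (Fin d → Fin g)) (h𝓗 : 𝓗.Nonempty)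
    (M : Fin d → (Fin d → Fin g) × Fin g → ℝ)
    (hM : ∀ (v : Fin d) (H : Fin d → Fin g) (y : Fin g), H ∈ 𝓗 →
      M v (H, y) = (1 / 𝓗.card) *
        (if y = H v then Real.exp ε / (Real.exp ε + g - 1)
         else 1 / (Real.exp ε + g - 1))) :
    ∀ (v₁ v₂ : Fin d) (H : Fin d → Fin g) (y : Fin g), H ∈ 𝓗 →
      M v₁ (H, y) ≤ Real.exp ε * M v₂ (H, y) := by
  intro v₁ v₂ H y hH
  rw [hM v₁ H y hH, hM v₂ H y hH]
  have hcard : (0:ℝ) < 𝓗.card := by exact_mod_cast Finset.card_pos.mpr h𝓗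
  have hg' : (2:ℝ) ≤ g := by exact_mod_cast hg
  have hden : (0:ℝ) < Real.exp ε + g - 1 := by
    have := Real.exp_pos ε; linarith
  have h1 : (1:ℝ) ≤ Real.exp ε := by
    have := Real.exp_pos ε
    nlinarith [Real.add_one_le_exp ε]
  rw [mul_left_comm]
  apply mul_le_mul_of_nonneg_left _ (by positivity)
  set D := Real.exp ε + (g:ℝ) - 1 with hD
  have hq : (1:ℝ)/D ≤ (if y = H v₂ then Real.exp ε / D else 1 / D) := by
    split_ifs
    · exact div_le_div_of_nonneg_right h1 hden.le
    · exact le_rfl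
  have hp : (if y = H v₁ then Real.exp ε / D else 1 / D) ≤ Real.exp ε / D := by
    split_ifs
    · exact le_rfl
    · apply div_le_div_of_nonneg_right h1 hden.le
  calc (if y = H v₁ then Real.exp ε / D else 1 / D) ≤ Real.exp ε / D := hp
    _ = Real.exp ε * (1/D) := by ring
    _ ≤ Real.exp ε * (if y = H v₂ then Real.exp ε / D else 1 / D) :=
        mul_le_mul_of_nonneg_left hq (Real.exp_pos ε).le
end

section
/- Fix ε > 0, an integer d ≥ 2, and a finite nonempty family 𝓗 of functions from Fin d to {0,1} such that for all distinct v₁, v₂ ∈ Fin d, exactly half of the functions H ∈ 𝓗 satisfy H(v₁) = H(v₂). Let p = e^ε/(e^ε + 1). For input v, the mechanism chooses H uniformly from 𝓗 and outputs (H, b') where b' = H(v) with probability p and b' = 1 − H(v) with probability 1 − p. Then for every v ∈ Fin d, Pr[H(v) = b' | input v] = p, and for all distinct v₁, v₂ ∈ Fin d, Pr[H(v₁) = b' | input v₂] = 1/2. That is, Binary Local Hashing is a pure LDP protocol with p* = e^ε/(e^ε + 1) and q* = 1/2. -/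
/-- Binary Local Hashing is a pure LDP protocol with `p* = e^ε/(e^ε+1)` and `q* = 1/2`:
with `H` uniform in a universal family `𝓗` (for distinct inputs, exactly half the functions
hash them to the same bit) and the hashed bit kept with probability `p = e^ε/(e^ε+1)`,
the probability that the output `(H, b')` supports the true input `v` (i.e. `H v = b'`) is
`p`, and for any other input `v₂ ≠ v₁` the probability that the output on input `v₂`
supports `v₁` is `1/2`. -/
theorem blh_pure
    (ε : ℝ) (hε : 0 < ε) (d : ℕ) (hd : 2 ≤ d)
    (𝓗 : Finset (Fin d → Bool)) (h𝓗 : 𝓗.Nonempty)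
    (hhalf : ∀ v₁ v₂ : Fin d, v₁ ≠ v₂ →
      2 * (𝓗.filter (fun H => H v₁ = H v₂)).card = 𝓗.card)
    (p : ℝ) (hp : p = Real.exp ε / (Real.exp ε + 1))
    (P : Fin d → (Fin d → Bool) × Bool → ℝ)
    (hP : ∀ (v : Fin d) (H : Fin d → Bool) (b : Bool),
      P v (H, b) = (1 / 𝓗.card) * (if b = H v then p else 1 - p)) :
    (∀ v : Fin d,
      ∑ H ∈ 𝓗, ∑ b : Bool, (if H v = b then P v (H, b) else 0) = p) ∧
    (∀ v₁ v₂ : Fin d, v₁ ≠ v₂ →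
      ∑ H ∈ 𝓗, ∑ b : Bool, (if H v₁ = b then P v₂ (H, b) else 0) = 1 / 2) := by
  have hn0 : 𝓗.card ≠ 0 := Finset.card_ne_zero_of_mem h𝓗.choose_spec
  have hn : (𝓗.card : ℝ) ≠ 0 := Nat.cast_ne_zero.mpr hn0
  constructor
  · intro v
    have h1 : ∀ H ∈ 𝓗, ∑ b : Bool, (if H v = b then P v (H, b) else 0)
        = (1 / 𝓗.card) * p := by
      intro H _
      cases h : H v <;> simp [h, hP]
    rw [Finset.sum_congr rfl h1, Finset.sum_const, nsmul_eq_mul]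
    field_simp
  · intro v₁ v₂ hne
    have key : ∀ H ∈ 𝓗, ∑ b : Bool, (if H v₁ = b then P v₂ (H, b) else 0)
        = (1 / 𝓗.card) * (if H v₁ = H v₂ then p else 1 - p) := by
      intro H _
      cases h1 : H v₁ <;> cases h2 : H v₂ <;> simp [h1, h2, hP]
    rw [Finset.sum_congr rfl key, ← Finset.mul_sum, Finset.sum_ite,
      Finset.sum_const, Finset.sum_const, nsmul_eq_mul, nsmul_eq_mul]
    have hc := hhalf v₁ v₂ hne
    have hsub : (𝓗.filter (fun H => ¬ H v₁ = H v₂)).card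
        = 𝓗.card - (𝓗.filter (fun H => H v₁ = H v₂)).card := by
      rw [Finset.filter_not, Finset.card_sdiff_of_subset (Finset.filter_subset _ _)]
    set s := (𝓗.filter (fun H => H v₁ = H v₂)).card with hs
    have hsle : s ≤ 𝓗.card := Finset.card_filter_le _ _
    have hcr : (𝓗.card : ℝ) = 2 * s := by exact_mod_cast hc.symm
    have hsubr : ((𝓗.filter (fun H => ¬ H v₁ = H v₂)).card : ℝ) = (𝓗.card : ℝ) - s := by
      rw [hsub, Nat.cast_sub hsle]
    rw [hsubr, hcr]
    have hs0 : (s : ℝ) ≠ 0 := by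
      intro h; apply hn; rw [hcr, h]; ring
    field_simp
    ring
end

section
/- Fix ε > 0 and let W(g) = (e^ε − 1 + g)²/((e^ε − 1)²·(g − 1)) for real g > 1. Then for every g > 1, W(g) ≥ 4e^ε/(e^ε − 1)², with equality if and only if g = e^ε + 1. In particular, the Optimized Local Hashing protocol, which uses hash range size g = e^ε + 1, has approximate estimator variance n·4e^ε/(e^ε − 1)², minimal among all local-hashing protocols, and this equals the approximate estimator variance of Optimized Unary Encoding. -/
/-- Optimized Local Hashing: the local-hashing approximate variance
`W(g) = (e^ε−1+g)²/((e^ε−1)²(g−1))` satisfies `W(g) ≥ 4e^ε/(e^ε−1)²` for all `g > 1`,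
with equality iff `g = e^ε + 1`; the optimum `4e^ε/(e^ε−1)²` equals the approximate
per-user estimator variance of Optimized Unary Encoding. -/
theorem olh_optimal
    (ε : ℝ) (hε : 0 < ε) (g : ℝ) (hg : 1 < g) :
    4 * Real.exp ε / (Real.exp ε - 1) ^ 2
        ≤ (Real.exp ε - 1 + g) ^ 2 / ((Real.exp ε - 1) ^ 2 * (g - 1)) ∧
    ((Real.exp ε - 1 + g) ^ 2 / ((Real.exp ε - 1) ^ 2 * (g - 1))
        = 4 * Real.exp ε / (Real.exp ε - 1) ^ 2 ↔ g = Real.exp ε + 1) := by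
  have he : 1 < Real.exp ε := by
    have := Real.exp_lt_exp.mpr hε
    simpa using this
  have ha : 0 < Real.exp ε - 1 := by linarith
  have hA : 0 < (Real.exp ε - 1) ^ 2 := by positivity
  have ht : 0 < g - 1 := by linarith
  have hAt : 0 < (Real.exp ε - 1) ^ 2 * (g - 1) := by positivity
  have key : 4 * Real.exp ε * (g - 1) ≤ (Real.exp ε - 1 + g) ^ 2 := by
    nlinarith [sq_nonneg (g - (Real.exp ε + 1))]
  constructor
  · rw [div_le_div_iff₀ hA hAt]
    nlinarith
  · rw [div_eq_div_iff (ne_of_gt hAt) (ne_of_gt hA)]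
    constructor
    · intro h
      have heq : (Real.exp ε - 1 + g) ^ 2 = 4 * Real.exp ε * (g - 1) := by
        have h' : (Real.exp ε - 1 + g) ^ 2 * (Real.exp ε - 1) ^ 2
            = 4 * Real.exp ε * (g - 1) * (Real.exp ε - 1) ^ 2 := by linarith [h]; 
        exact mul_right_cancel₀ (ne_of_gt hA) h'
      have h2 : (g - (Real.exp ε + 1)) ^ 2 = 0 := by nlinarith
      have h3 := pow_eq_zero_iff (n := 2) (by norm_num) |>.mp h2
      linarith
    · intro h
      subst h
      ring
end
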